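/- (Root Independence Lemma) Let P be a flow-based polytope with edge set E, let f be a vertex of P, and let r, s ∈ [n] be two roots. Then P_{f,r}(x) = P_{f,s}(x) for every x ∈ P. -/

import Mathlib

/-!
Write `M = Mf n f x`. A tree `T` with `Flip_f(T) = A` amounts to a choice, for each edge `e` of
`A`, of one of the (at most two) edges `e`, `ē` that `Flip_f` sends to `e`; so the fibre of `A`
contributes `∏_{e ∈ A} M e`, and `P_{f,r}(x)` is its `r`-independent prefactor times the
arborescence polynomial `SArb n r M`. The weights `M` are nonnegative, and balanced at every
vertex because `f` and `x` have the same demands.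

A map `h` under which everything flows into `r` and `h r ≠ r` has one cycle, through `r`; cutting
that cycle just after `r`, or just before it, gives `∑_v M(v,r) SArb_v = (∑_w M(r,w)) SArb_r`.
With balance, `v ↦ SArb_v` is harmonic for the walk along `M`, so it is constant along the edges
of a positive-weight arborescence rooted at a maximiser, hence constant.
-/

open Finset

open scoped Classical

/-- The set `E₀` of non-loop directed edges on vertex set `Fin n`. -/
def E0 (n : ℕ) : Finset (Fin n × Fin n) :=
  Finset.univ.filter (fun e => e.1 ≠ e.2)

/-- The reverse of a directed edge. -/
def rev {n : ℕ} (e : Fin n × Fin n) : Fin n × Fin n := (e.2, e.1)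

/-- The underlying undirected (simple) graph of a set of directed edges. -/
def undirGraph (n : ℕ) (D : Finset (Fin n × Fin n)) : SimpleGraph (Fin n) where
  Adj u v := u ≠ v ∧ ((u, v) ∈ D ∨ (v, u) ∈ D)
  symm := ⟨fun u v h => ⟨h.1.symm, h.2.symm⟩⟩
  loopless := ⟨fun u h => h.1 rfl⟩

/-- There is a directed walk from `i` to `j` using only edges in `D`. -/
def reachesIn (n : ℕ) (D : Finset (Fin n × Fin n)) (i j : Fin n) : Prop :=
  Relation.ReflTransGen (fun a b => (a, b) ∈ D) i j

/-- `T` is a directed tree: `n-1` non-loop directed edges whose underlying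
undirected edges form a spanning tree of `Fin n`. -/
def IsDirTree (n : ℕ) (T : Finset (Fin n × Fin n)) : Prop :=
  T ⊆ E0 n ∧ T.card = n - 1 ∧ (undirGraph n T).Connected

/-- `A` is an arborescence rooted at `r`: a directed tree such that from every
vertex there is a directed walk to `r` using only edges of `A`. -/
def IsArb (n : ℕ) (r : Fin n) (A : Finset (Fin n × Fin n)) : Prop :=
  IsDirTree n A ∧ ∀ v : Fin n, reachesIn n A v r

/-- `Flip_f` of a single edge: reverse the edge iff `f e = 1`. -/
noncomputable def flipEdge (n : ℕ) (f : Fin n × Fin n → ℝ) (e : Fin n × Fin n) :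
    Fin n × Fin n :=
  if f e = 1 then rev e else e

/-- `Flip_f` of a set of edges. -/
noncomputable def flipSet (n : ℕ) (f : Fin n × Fin n → ℝ)
    (T : Finset (Fin n × Fin n)) : Finset (Fin n × Fin n) :=
  T.image (flipEdge n f)

/-- Membership in the flow-based polytope with variable edge set `E` and
demands `d` (points are extended by zero outside `E`). -/
def memFlowPolytope (n : ℕ) (E : Finset (Fin n × Fin n)) (d : Fin n → ℤ)
    (x : Fin n × Fin n → ℝ) : Prop :=
  (∀ e, e ∉ E → x e = 0) ∧ (∀ e ∈ E, x e ∈ Set.Icc (0 : ℝ) 1) ∧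
    ∀ v : Fin n, (∑ i, x (v, i)) - (∑ i, x (i, v)) = (d v : ℝ)

/-- A vertex of the flow-based polytope: a 0/1 point of the polytope. -/
def IsVertex (n : ℕ) (E : Finset (Fin n × Fin n)) (d : Fin n → ℤ)
    (f : Fin n × Fin n → ℝ) : Prop :=
  memFlowPolytope n E d f ∧ ∀ e ∈ E, f e = 0 ∨ f e = 1

/-- The 0/1 indicator of a set of edges. -/
def ind (n : ℕ) (S : Finset (Fin n × Fin n)) : Fin n × Fin n → ℝ :=
  fun e => if e ∈ S then 1 else 0

/-- The vertices of the flow-based polytope, encoded by their supports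
(sets of edges carrying flow `1`). -/
noncomputable def flowVertices (n : ℕ) (E : Finset (Fin n × Fin n)) (d : Fin n → ℤ) :
    Finset (Finset (Fin n × Fin n)) :=
  Finset.univ.filter (fun S => S ⊆ E ∧ memFlowPolytope n E d (ind n S))

/-- The polynomial `P_{f,r}(x)` of the Bernoulli factory. Since `f` is 0/1,
`x_e^{f_e}(1-x_e)^{1-f_e}` is `x_e` if `f_e = 1` and `1 - x_e` otherwise, and
`x_e^{1-f_e}(1-x_e)^{f_e}` is `1 - x_e` if `f_e = 1` and `x_e` otherwise. -/
noncomputable def Pfr (n : ℕ) (E : Finset (Fin n × Fin n))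
    (f : Fin n × Fin n → ℝ) (r : Fin n) (x : Fin n × Fin n → ℝ) : ℝ :=
  (∏ e ∈ E, if f e = 1 then x e else 1 - x e) *
    ∑ T ∈ Finset.univ.filter
        (fun T : Finset (Fin n × Fin n) =>
          IsDirTree n T ∧ T ⊆ E ∧ IsArb n r (flipSet n f T)),
      ∏ e ∈ T, (if f e = 1 then 1 - x e else x e)

/-- Membership in the circulation hyperplane `Circ̄`. -/
def memCircBar (n : ℕ) (y : Fin n × Fin n → ℝ) : Prop :=
  ∀ v : Fin n,
    (∑ i ∈ Finset.univ.filter (fun i => i ≠ v), y (v, i)) -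
      (∑ i ∈ Finset.univ.filter (fun i => i ≠ v), y (i, v)) = 0

/-- The arborescence-generating polynomial `SArb_r(y)`. -/
noncomputable def SArb (n : ℕ) (r : Fin n) (y : Fin n × Fin n → ℝ) : ℝ :=
  ∑ A ∈ Finset.univ.filter (fun A : Finset (Fin n × Fin n) => IsArb n r A),
    ∏ e ∈ A, y e

/-- The map `M_f`: `M_f(x)_e = x_e (1 - f_e) + (1 - x_ē) f_ē`. -/
def Mf (n : ℕ) (f x : Fin n × Fin n → ℝ) : Fin n × Fin n → ℝ :=
  fun e => x e * (1 - f e) + (1 - x (rev e)) * f (rev e)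

theorem Finset.prod_sum_fiber_eq_sum_injOn {α β R : Type*} [Fintype α] [DecidableEq α]
    [DecidableEq β] [CommSemiring R] (φ : α → β) (c : α → R) (A : Finset β) :
    ∏ b ∈ A, ∑ t ∈ univ.filter (fun t => φ t = b), c t =
      ∑ T ∈ univ.filter (fun T : Finset α => T.image φ = A ∧ Set.InjOn φ T), ∏ t ∈ T, c t := by
  induction A using Finset.induction_on with
  | empty =>
    have hempty : univ.filter (fun T : Finset α => T.image φ = ∅ ∧ Set.InjOn φ T) = {∅} := by
      ext T
      simp only [mem_filter, mem_univ, true_and, image_eq_empty, mem_singleton]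
      exact ⟨And.left, fun h => ⟨h, by simp [h]⟩⟩
    rw [hempty, sum_singleton, prod_empty, prod_empty]
  | insert b A hb ih =>
    have hnot_mem {t : α} {T : Finset α} (ht : φ t = b) (hT : T.image φ = A) : t ∉ T :=
      fun h => hb (hT ▸ ht ▸ mem_image_of_mem φ h)
    rw [prod_insert hb, ih, sum_mul_sum, ← sum_product']
    refine sum_bij (fun p _ => insert p.1 p.2) ?_ ?_ ?_ ?_
    · rintro ⟨t, T⟩ hp
      simp only [mem_product, mem_filter, mem_univ, true_and] at hp ⊢
      obtain ⟨ht, hT, hinj⟩ := hp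
      refine ⟨by rw [image_insert, hT, ht], ?_⟩
      rw [coe_insert, Set.injOn_insert (hnot_mem ht hT), ← coe_image, hT, ht]
      exact ⟨hinj, hb⟩
    · rintro ⟨t₁, T₁⟩ h₁ ⟨t₂, T₂⟩ h₂ (heq : insert t₁ T₁ = insert t₂ T₂)
      simp only [mem_product, mem_filter, mem_univ, true_and] at h₁ h₂
      have ht : t₁ = t₂ := by
        have hmem : t₁ ∈ insert t₂ T₂ := heq ▸ mem_insert_self t₁ T₁
        exact (mem_insert.mp hmem).resolve_right (hnot_mem h₁.1 h₂.2.1)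
      subst ht
      rw [← erase_insert (hnot_mem h₁.1 h₁.2.1), heq, erase_insert (hnot_mem h₂.1 h₂.2.1)]
    · intro T hT
      simp only [mem_filter, mem_univ, true_and] at hT
      obtain ⟨hTimage, hinj⟩ := hT
      obtain ⟨t, ht, htb⟩ := mem_image.mp (hTimage ▸ mem_insert_self b A)
      have himage : (T.erase t).image φ = A := by
        ext a
        simp only [mem_image, mem_erase]
        constructor
        · rintro ⟨s, ⟨hst, hs⟩, rfl⟩
          have hsA : φ s ∈ insert b A := hTimage ▸ mem_image_of_mem φ hs
          exact (mem_insert.mp hsA).resolve_left fun h => hst (hinj hs ht (h.trans htb.symm))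
        · intro ha
          obtain ⟨s, hs, rfl⟩ := mem_image.mp (hTimage ▸ mem_insert_of_mem ha)
          exact ⟨s, ⟨fun h => hb (by rwa [h, htb] at ha), hs⟩, rfl⟩
      refine ⟨(t, T.erase t), ?_, insert_erase ht⟩
      simp only [mem_product, mem_filter, mem_univ, true_and]
      exact ⟨htb, himage, hinj.mono (coe_subset.mpr (erase_subset t T))⟩
    · rintro ⟨t, T⟩ hp
      simp only [mem_product, mem_filter, mem_univ, true_and] at hp
      exact (prod_insert (hnot_mem hp.1 hp.2.1)).symm

lemma prod_update_eq_mul_prod_erase {α M : Type*} [Fintype α] [DecidableEq α] [CommMonoid M]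
    (y : α × α → M) (g : α → α) (v w : α) :
    ∏ u, y (u, Function.update g v w u) = y (v, w) * ∏ u ∈ univ.erase v, y (u, g u) := by
  rw [← mul_prod_erase univ _ (mem_univ v), Function.update_self]
  congr 1
  exact prod_congr rfl fun u hu => by rw [Function.update_of_ne (ne_of_mem_erase hu)]

lemma exists_iterate_eq_of_forall_ne {α : Type*} {g h : α → α} {t u : α} {k : ℕ}
    (hgh : ∀ x, x ≠ t → h x = g x) (hk : g^[k] u = t) : ∃ m, h^[m] u = t := by
  induction k generalizing u with
  | zero => exact ⟨0, hk⟩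
  | succ k ih =>
    by_cases hu : u = t
    · exact ⟨0, hu⟩
    · obtain ⟨m, hm⟩ := ih (u := g u) hk
      exact ⟨m + 1, by rwa [Function.iterate_succ_apply, hgh u hu]⟩

/-- For `r` on a cycle of `h`, the point of that cycle mapped to `r`. -/
noncomputable def cyclePred {α : Type*} (h : α → α) (r : α) : α :=
  h^[Function.minimalPeriod h r - 1] r

lemma eq_cyclePred {α : Type*} {h : α → α} {r v : α} {m : ℕ} (hv : h v = r)
    (hm : h^[m] r = v) : v = cyclePred h r := by
  have hper : Function.IsPeriodicPt h (m + 1) r := by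
    rw [Function.IsPeriodicPt, Function.IsFixedPt, Function.iterate_succ_apply', hm, hv]
  have hpos := hper.minimalPeriod_pos (Nat.succ_pos m)
  calc v = h^[m] (h^[Function.minimalPeriod h r] r) := by rw [Function.iterate_minimalPeriod, hm]
    _ = h^[Function.minimalPeriod h r - 1] (h^[m + 1] r) := by
      rw [← Function.iterate_add_apply, ← Function.iterate_add_apply]
      congr 1
      omega
    _ = cyclePred h r := by rw [hper.eq, cyclePred]

lemma apply_cyclePred {α : Type*} {h : α → α} {r : α} (hr : ∃ k, h^[k] (h r) = r) :
    h (cyclePred h r) = r := by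
  obtain ⟨k, hk⟩ := hr
  have hv : h (h^[k] r) = r := by
    rwa [← Function.iterate_succ_apply' h, Function.iterate_succ_apply]
  rwa [← eq_cyclePred hv rfl]

section

variable {n : ℕ}

lemma mem_E0 {e : Fin n × Fin n} : e ∈ E0 n ↔ e.1 ≠ e.2 := by
  simp [E0]

@[simp] lemma rev_rev (e : Fin n × Fin n) : rev (rev e) = e := rfl

lemma rev_ne_self {e : Fin n × Fin n} (he : e ∈ E0 n) : rev e ≠ e := fun h =>
  mem_E0.mp he (congrArg Prod.snd h)

lemma reachesIn_reachable {D : Finset (Fin n × Fin n)} (hD : D ⊆ E0 n) {a b : Fin n}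
    (h : reachesIn n D a b) : (undirGraph n D).Reachable a b := by
  induction h with
  | refl => rfl
  | tail _ hbc ih => exact ih.trans (SimpleGraph.Adj.reachable ⟨mem_E0.mp (hD hbc), Or.inl hbc⟩)

lemma undirGraph_connected_of_reachesIn {D : Finset (Fin n × Fin n)} (hD : D ⊆ E0 n)
    {r : Fin n} (h : ∀ v, reachesIn n D v r) : (undirGraph n D).Connected :=
  SimpleGraph.connected_iff_exists_forall_reachable _ |>.mpr
    ⟨r, fun v => (reachesIn_reachable hD (h v)).symm⟩

/-! ### Arborescences as parent maps -/

noncomputable def parentMaps (n : ℕ) (r : Fin n) : Finset (Fin n → Fin n) :=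
  univ.filter fun g => g r = r ∧ ∀ u, ∃ k, g^[k] u = r

lemma mem_parentMaps {r : Fin n} {g : Fin n → Fin n} :
    g ∈ parentMaps n r ↔ g r = r ∧ ∀ u, ∃ k, g^[k] u = r := by
  simp [parentMaps]

lemma apply_ne_self_of_mem_parentMaps {r u : Fin n} {g : Fin n → Fin n}
    (hg : g ∈ parentMaps n r) (hu : u ≠ r) : g u ≠ u := fun hfix => by
  obtain ⟨k, hk⟩ := (mem_parentMaps.mp hg).2 u
  exact hu (by rwa [Function.iterate_fixed hfix] at hk)

noncomputable def parentEdges (r : Fin n) (g : Fin n → Fin n) : Finset (Fin n × Fin n) :=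
  (univ.erase r).image fun u => (u, g u)

lemma mem_parentEdges {r : Fin n} {g : Fin n → Fin n} {e : Fin n × Fin n} :
    e ∈ parentEdges r g ↔ e.1 ≠ r ∧ g e.1 = e.2 := by
  obtain ⟨a, b⟩ := e
  simp [parentEdges, and_comm, eq_comm]

lemma reachesIn_parentEdges {r u : Fin n} {g : Fin n → Fin n} {k : ℕ} (hk : g^[k] u = r) :
    reachesIn n (parentEdges r g) u r := by
  induction k generalizing u with
  | zero => exact hk ▸ Relation.ReflTransGen.refl
  | succ k ih =>
    by_cases hu : u = r
    · exact hu ▸ Relation.ReflTransGen.refl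
    · exact Relation.ReflTransGen.head (mem_parentEdges.mpr ⟨hu, rfl⟩) (ih hk)

lemma exists_iterate_of_reachesIn_parentEdges {r u : Fin n} {g : Fin n → Fin n}
    (h : reachesIn n (parentEdges r g) u r) : ∃ k, g^[k] u = r := by
  induction h using Relation.ReflTransGen.head_induction_on with
  | refl => exact ⟨0, rfl⟩
  | head hac _ ih =>
    obtain ⟨k, hk⟩ := ih
    exact ⟨k + 1, by rwa [Function.iterate_succ_apply, (mem_parentEdges.mp hac).2]⟩

lemma isArb_parentEdges {r : Fin n} {g : Fin n → Fin n} (hg : g ∈ parentMaps n r) :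
    IsArb n r (parentEdges r g) := by
  have hreach : ∀ u, reachesIn n (parentEdges r g) u r := fun u =>
    reachesIn_parentEdges ((mem_parentMaps.mp hg).2 u).choose_spec
  have hsub : parentEdges r g ⊆ E0 n := fun e he => by
    obtain ⟨hne, hge⟩ := mem_parentEdges.mp he
    exact mem_E0.mpr fun h => apply_ne_self_of_mem_parentMaps hg hne (hge.trans h.symm)
  have hcard : (parentEdges r g).card = n - 1 := by
    rw [parentEdges, card_image_of_injective _ fun a b h => congrArg Prod.fst h,
      card_erase_of_mem (mem_univ r), card_univ, Fintype.card_fin]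
  exact ⟨⟨hsub, hcard, undirGraph_connected_of_reachesIn hsub hreach⟩, hreach⟩

/-- The `n - 1` edges must cover the `n - 1` non-root vertices as tails. -/
lemma IsArb.image_fst_and_injOn {r : Fin n} {A : Finset (Fin n × Fin n)} (hA : IsArb n r A) :
    A.image Prod.fst = univ.erase r ∧ Set.InjOn Prod.fst (A : Set (Fin n × Fin n)) := by
  have hcover : univ.erase r ⊆ A.image Prod.fst := fun u hu => by
    rcases (hA.2 u).cases_head with h | ⟨c, hc, -⟩
    · exact absurd h (ne_of_mem_erase hu)
    · exact mem_image.mpr ⟨(u, c), hc, rfl⟩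
  have hcard : (univ.erase r).card = A.card := by
    rw [card_erase_of_mem (mem_univ r), card_univ, Fintype.card_fin, hA.1.2.1]
  have hle : (A.image Prod.fst).card ≤ (univ.erase r).card := hcard ▸ card_image_le
  refine ⟨(eq_of_subset_of_card_le hcover hle).symm, card_image_iff.mp ?_⟩
  exact le_antisymm card_image_le (hcard ▸ card_le_card hcover)

lemma exists_parentMaps_of_isArb {r : Fin n} {A : Finset (Fin n × Fin n)} (hA : IsArb n r A) :
    ∃ g ∈ parentMaps n r, parentEdges r g = A := by
  obtain ⟨himage, hinj⟩ := hA.image_fst_and_injOn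
  have hparent : ∀ u, ∃ w, (u ≠ r → (u, w) ∈ A) ∧ (u = r → w = r) := fun u => by
    by_cases hu : u = r
    · exact ⟨r, fun h => absurd hu h, fun _ => rfl⟩
    · obtain ⟨e, he, rfl⟩ := mem_image.mp (himage ▸ mem_erase.mpr ⟨hu, mem_univ u⟩)
      exact ⟨e.2, fun _ => he, fun h => absurd h hu⟩
  choose g hgA hgr using hparent
  have hedges : parentEdges r g = A := by
    ext e
    refine ⟨fun he => ?_, fun he => ?_⟩
    · obtain ⟨hne, hge⟩ := mem_parentEdges.mp he
      rw [← Prod.mk.eta (p := e), ← hge]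
      exact hgA e.1 hne
    · have hne : e.1 ≠ r := ne_of_mem_erase (himage ▸ mem_image_of_mem Prod.fst he)
      exact mem_parentEdges.mpr ⟨hne, congrArg Prod.snd (hinj (hgA e.1 hne) he rfl)⟩
  refine ⟨g, mem_parentMaps.mpr ⟨hgr r rfl, fun u => ?_⟩, hedges⟩
  exact exists_iterate_of_reachesIn_parentEdges (hedges ▸ hA.2 u)

lemma sArb_eq_sum_parentMaps (r : Fin n) (y : Fin n × Fin n → ℝ) :
    SArb n r y = ∑ g ∈ parentMaps n r, ∏ u ∈ univ.erase r, y (u, g u) := by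
  refine (sum_bij (fun g _ => parentEdges r g) (fun g hg => ?_) (fun g₁ hg₁ g₂ hg₂ h => ?_)
    (fun A hA => ?_) (fun g _ => ?_)).symm
  · exact mem_filter.mpr ⟨mem_univ _, isArb_parentEdges hg⟩
  · funext u
    by_cases hu : u = r
    · rw [hu, (mem_parentMaps.mp hg₁).1, (mem_parentMaps.mp hg₂).1]
    · have hmem : (u, g₁ u) ∈ parentEdges r g₂ := h ▸ mem_parentEdges.mpr ⟨hu, rfl⟩
      exact (mem_parentEdges.mp hmem).2.symm
  · obtain ⟨g, hg, rfl⟩ := exists_parentMaps_of_isArb (mem_filter.mp hA).2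
    exact ⟨g, hg, rfl⟩
  · exact (prod_image fun a _ b _ h => congrArg Prod.fst h).symm

/-! ### The cycle-cutting identity -/

/-- The functional graph of such a map is a single cycle through `r` with trees attached. -/
noncomputable def cycleMaps (n : ℕ) (r : Fin n) : Finset (Fin n → Fin n) :=
  univ.filter fun h => h r ≠ r ∧ ∀ u, ∃ k, h^[k] u = r

lemma mem_cycleMaps {r : Fin n} {h : Fin n → Fin n} :
    h ∈ cycleMaps n r ↔ h r ≠ r ∧ ∀ u, ∃ k, h^[k] u = r := by
  simp [cycleMaps]

/-- Cutting the edge out of `r` splits a cycle map into an edge `(r, w)` and a parent map. -/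
lemma sum_cycleMaps_eq_mul_sArb (r : Fin n) (y : Fin n × Fin n → ℝ) :
    ∑ h ∈ cycleMaps n r, ∏ u, y (u, h u) = (∑ w ∈ univ.erase r, y (r, w)) * SArb n r y := by
  rw [sArb_eq_sum_parentMaps, sum_mul_sum, ← sum_product']
  refine (sum_nbij' (fun p => Function.update p.2 r p.1) (fun h => (h r, Function.update h r r))
    ?_ ?_ ?_ ?_ ?_).symm
  · rintro ⟨w, g⟩ hp
    obtain ⟨hw, hg⟩ := mem_product.mp hp
    refine mem_cycleMaps.mpr ⟨by simpa using ne_of_mem_erase hw, fun u => ?_⟩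
    exact exists_iterate_eq_of_forall_ne (fun x hx => Function.update_of_ne hx _ _)
      ((mem_parentMaps.mp hg).2 u).choose_spec
  · intro h hh
    obtain ⟨hr, hreach⟩ := mem_cycleMaps.mp hh
    refine mem_product.mpr ⟨mem_erase.mpr ⟨hr, mem_univ _⟩,
      mem_parentMaps.mpr ⟨Function.update_self .., fun u => ?_⟩⟩
    exact exists_iterate_eq_of_forall_ne (fun x hx => Function.update_of_ne hx _ _)
      (hreach u).choose_spec
  · rintro ⟨w, g⟩ hp
    have hgr : g r = r := (mem_parentMaps.mp (mem_product.mp hp).2).1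
    simp [Function.update_eq_self_iff, hgr]
  · intro h _
    simp
  · rintro ⟨w, g⟩ _
    exact (prod_update_eq_mul_prod_erase y g r w).symm

/-- Cutting the edge into `r` on the cycle splits a cycle map into an edge `(v, r)` and a parent
map rooted at `v`; `cyclePred` recovers `v`. -/
lemma sum_cycleMaps_eq_sum_mul_sArb (r : Fin n) (y : Fin n × Fin n → ℝ) :
    ∑ h ∈ cycleMaps n r, ∏ u, y (u, h u) = ∑ v ∈ univ.erase r, y (v, r) * SArb n v y := by
  simp_rw [sArb_eq_sum_parentMaps, mul_sum]
  rw [sum_sigma']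
  refine (sum_nbij' (fun p => Function.update p.2 p.1 r)
    (fun h => ⟨cyclePred h r, Function.update h (cyclePred h r) (cyclePred h r)⟩)
    ?_ ?_ ?_ ?_ ?_).symm
  · rintro ⟨v, g⟩ hp
    obtain ⟨hv, hg⟩ : v ∈ univ.erase r ∧ g ∈ parentMaps n v := mem_sigma.mp hp
    have hvr : v ≠ r := ne_of_mem_erase hv
    refine mem_cycleMaps.mpr ⟨?_, fun u => ?_⟩
    · rw [Function.update_of_ne hvr.symm]
      exact apply_ne_self_of_mem_parentMaps hg hvr.symm
    · obtain ⟨m, hm⟩ := exists_iterate_eq_of_forall_ne (h := Function.update g v r)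
        (fun x hx => Function.update_of_ne hx _ _) ((mem_parentMaps.mp hg).2 u).choose_spec
      exact ⟨m + 1, by rw [Function.iterate_succ_apply', hm, Function.update_self]⟩
  · intro h hh
    obtain ⟨hr, hreach⟩ := mem_cycleMaps.mp hh
    have hpred := apply_cyclePred (hreach (h r))
    have hpred_ne : cyclePred h r ≠ r := fun hc => hr (by rwa [hc] at hpred)
    refine mem_sigma.mpr ⟨mem_erase.mpr ⟨hpred_ne, mem_univ _⟩,
      mem_parentMaps.mpr ⟨Function.update_self .., fun u => ?_⟩⟩
    obtain ⟨k, hk⟩ := hreach u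
    have hu : h^[Function.minimalPeriod h r - 1 + k] u = cyclePred h r := by
      rw [Function.iterate_add_apply, hk, cyclePred]
    exact exists_iterate_eq_of_forall_ne (fun x hx => Function.update_of_ne hx _ _) hu
  · rintro ⟨v, g⟩ hp
    obtain ⟨hgv, hreach⟩ : g v = v ∧ ∀ u, ∃ k, g^[k] u = v :=
      mem_parentMaps.mp (mem_sigma.mp hp).2
    obtain ⟨m, hm⟩ := exists_iterate_eq_of_forall_ne (h := Function.update g v r)
      (fun x hx => Function.update_of_ne hx _ _) (hreach r).choose_spec
    rw [← eq_cyclePred (Function.update_self ..) hm]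
    simp [Function.update_eq_self_iff, hgv]
  · intro h hh
    simp [apply_cyclePred ((mem_cycleMaps.mp hh).2 (h r))]
  · rintro ⟨v, g⟩ _
    exact (prod_update_eq_mul_prod_erase y g v r).symm

/-! ### Root independence of the arborescence polynomial -/

lemma sum_mul_sArb_eq_mul_sArb (r : Fin n) (y : Fin n × Fin n → ℝ) :
    ∑ v ∈ univ.erase r, y (v, r) * SArb n v y = (∑ w ∈ univ.erase r, y (r, w)) * SArb n r y :=
  (sum_cycleMaps_eq_sum_mul_sArb r y).symm.trans (sum_cycleMaps_eq_mul_sArb r y)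

lemma sArb_nonneg {y : Fin n × Fin n → ℝ} (hy : ∀ e, 0 ≤ y e) (r : Fin n) : 0 ≤ SArb n r y :=
  sum_nonneg fun _ _ => prod_nonneg fun e _ => hy e

lemma memCircBar.sum_out_eq_sum_in {y : Fin n × Fin n → ℝ} (hc : memCircBar n y) (w : Fin n) :
    ∑ v ∈ univ.erase w, y (w, v) = ∑ v ∈ univ.erase w, y (v, w) := by
  have hbal := hc w
  rw [filter_ne'] at hbal
  linarith

/-- Maximum principle: by the cycle-cutting identity and the balance of `y`, a maximum of
`v ↦ SArb n v y` propagates backwards along the edges of positive weight. -/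
lemma sArb_eq_of_forall_le {y : Fin n × Fin n → ℝ} (hy : ∀ e, 0 ≤ y e) (hc : memCircBar n y)
    {u w : Fin n} (hw : ∀ v, SArb n v y ≤ SArb n w y) (hu : y (u, w) ≠ 0) :
    SArb n u y = SArb n w y := by
  by_cases huw : u = w
  · rw [huw]
  have hzero : ∑ v ∈ univ.erase w, y (v, w) * (SArb n w y - SArb n v y) = 0 := by
    simp only [mul_sub, sum_sub_distrib, ← sum_mul, sum_mul_sArb_eq_mul_sArb,
      hc.sum_out_eq_sum_in, sub_self]
  have hterm := (sum_eq_zero_iff_of_nonneg fun v _ =>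
    mul_nonneg (hy _) (sub_nonneg.mpr (hw v))).mp hzero u (mem_erase.mpr ⟨huw, mem_univ u⟩)
  exact le_antisymm (hw u) (by linarith [(mul_eq_zero.mp hterm).resolve_left hu])

lemma sArb_eq_sArb_of_nonneg_of_memCircBar {y : Fin n × Fin n → ℝ} (hy : ∀ e, 0 ≤ y e)
    (hc : memCircBar n y) (r s : Fin n) : SArb n r y = SArb n s y := by
  have : Nonempty (Fin n) := ⟨r⟩
  obtain ⟨w, hw⟩ := Finite.exists_max fun v => SArb n v y
  suffices h : ∀ v, SArb n v y = SArb n w y by rw [h r, h s]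
  by_cases h0 : SArb n w y = 0
  · exact fun v => le_antisymm (h0 ▸ hw v) (h0 ▸ sArb_nonneg hy v)
  obtain ⟨A, hA, hAy⟩ := exists_ne_zero_of_sum_ne_zero h0
  intro v
  induction (mem_filter.mp hA).2.2 v using Relation.ReflTransGen.head_induction_on with
  | refl => rfl
  | head hac _ ih =>
    exact (sArb_eq_of_forall_le hy hc (fun v => ih ▸ hw v) (prod_ne_zero_iff.mp hAy _ hac)).trans ih

/-! ### Flipping trees along a vertex -/

lemma flipEdge_eq_or (f : Fin n × Fin n → ℝ) (e : Fin n × Fin n) :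
    flipEdge n f e = e ∨ flipEdge n f e = rev e := by
  unfold flipEdge
  split_ifs <;> simp

lemma flipEdge_mem_E0_iff {f : Fin n × Fin n → ℝ} {e : Fin n × Fin n} :
    flipEdge n f e ∈ E0 n ↔ e ∈ E0 n := by
  rcases flipEdge_eq_or f e with h | h
  · rw [h]
  · rw [h, mem_E0, mem_E0, rev]
    exact ne_comm

lemma mem_flipSet_or_rev_mem {f : Fin n × Fin n → ℝ} {T : Finset (Fin n × Fin n)}
    {p : Fin n × Fin n} :
    (p ∈ flipSet n f T ∨ rev p ∈ flipSet n f T) ↔ (p ∈ T ∨ rev p ∈ T) := by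
  have hfib : ∀ q t, flipEdge n f t = q → t = q ∨ t = rev q := fun q t hq => by
    rcases flipEdge_eq_or f t with h | h
    · exact Or.inl (h.symm.trans hq)
    · exact Or.inr (by rw [← hq, h, rev_rev])
  constructor
  · rintro (h | h) <;> obtain ⟨t, ht, htq⟩ := mem_image.mp h <;>
      rcases hfib _ t htq with rfl | rfl <;> simp_all
  · rintro (h | h)
    · rcases flipEdge_eq_or f p with hp | hp
      · exact Or.inl (hp ▸ mem_image_of_mem _ h)
      · exact Or.inr (hp ▸ mem_image_of_mem _ h)
    · rcases flipEdge_eq_or f (rev p) with hp | hp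
      · exact Or.inr (hp ▸ mem_image_of_mem _ h)
      · exact Or.inl (rev_rev p ▸ hp ▸ mem_image_of_mem _ h)

lemma undirGraph_flipSet (f : Fin n × Fin n → ℝ) (T : Finset (Fin n × Fin n)) :
    undirGraph n (flipSet n f T) = undirGraph n T := by
  ext u v
  exact and_congr_right fun _ => mem_flipSet_or_rev_mem (p := (u, v))

variable {E : Finset (Fin n × Fin n)} {d : Fin n → ℤ} {f x : Fin n × Fin n → ℝ}

lemma IsVertex.eq_zero_or_eq_one (hf : IsVertex n E d f) (e : Fin n × Fin n) :
    f e = 0 ∨ f e = 1 := by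
  by_cases he : e ∈ E
  exacts [hf.2 e he, Or.inl (hf.1.1 e he)]

lemma memFlowPolytope.mem_Icc (hx : memFlowPolytope n E d x) (e : Fin n × Fin n) :
    x e ∈ Set.Icc 0 1 := by
  by_cases he : e ∈ E
  exacts [hx.2.1 e he, by simp [hx.1 e he]]

/-- `Mf n f x e` collects the weights of the two edges that `flipEdge n f` may send to `e`. -/
lemma sum_flipEdge_fiber (hf01 : ∀ e, f e = 0 ∨ f e = 1) {e : Fin n × Fin n} (he : e ∈ E0 n) :
    ∑ t ∈ univ.filter (fun t => flipEdge n f t = e), (if f t = 1 then 1 - x t else x t) =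
      Mf n f x e := by
  have hrev := rev_ne_self he
  rw [sum_filter, Fintype.sum_eq_add e (rev e) hrev.symm]
  · rcases hf01 e with h1 | h1 <;> rcases hf01 (rev e) with h2 | h2 <;>
      simp [flipEdge, Mf, h1, h2, hrev]
  · rintro t ⟨hte, hter⟩
    refine if_neg fun ht => ?_
    rcases flipEdge_eq_or f t with h | h
    · exact hte (h.symm.trans ht)
    · exact hter (by rw [← ht, h, rev_rev])

lemma sum_flipTrees_fiber_eq_prod_Mf (hf01 : ∀ e, f e = 0 ∨ f e = 1)
    (hfE : ∀ e, e ∉ E → f e = 0) (hxE : ∀ e, e ∉ E → x e = 0) {r : Fin n}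
    {A : Finset (Fin n × Fin n)} (hA : IsArb n r A) :
    ∑ T ∈ univ.filter (fun T : Finset (Fin n × Fin n) =>
        (IsDirTree n T ∧ T ⊆ E ∧ IsArb n r (flipSet n f T)) ∧ flipSet n f T = A),
      ∏ e ∈ T, (if f e = 1 then 1 - x e else x e) = ∏ e ∈ A, Mf n f x e := by
  rw [← prod_congr rfl fun e he => sum_flipEdge_fiber hf01 (hA.1.1 he),
    prod_sum_fiber_eq_sum_injOn]
  refine sum_subset (fun T hT => ?_) (fun T hT hTnot => ?_)
  · obtain ⟨⟨hdir, -, -⟩, hflip⟩ := (mem_filter.mp hT).2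
    refine mem_filter.mpr ⟨mem_univ _, hflip, card_image_iff.mp ?_⟩
    rw [← flipSet, hflip, hA.1.2.1, hdir.2.1]
  · obtain ⟨hflip, hinj⟩ : flipSet n f T = A ∧ Set.InjOn (flipEdge n f) T := (mem_filter.mp hT).2
    refine prod_eq_zero_iff.mpr ?_
    by_contra! hne
    apply hTnot
    have hTE : T ⊆ E := fun t ht =>
      by_contra fun htE => hne t ht (by simp [hfE t htE, hxE t htE])
    have hTE0 : T ⊆ E0 n := fun t ht => by
      have hmem : flipEdge n f t ∈ flipSet n f T := mem_image_of_mem _ ht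
      exact flipEdge_mem_E0_iff.mp (hA.1.1 (hflip ▸ hmem))
    have hcard : T.card = n - 1 := by
      rw [← card_image_of_injOn hinj]
      exact (congrArg card hflip).trans hA.1.2.1
    have hconn : (undirGraph n T).Connected := by
      rw [← undirGraph_flipSet f T, hflip]
      exact hA.1.2.2
    exact mem_filter.mpr ⟨mem_univ _, ⟨⟨hTE0, hcard, hconn⟩, hTE, hflip ▸ hA⟩, hflip⟩

lemma sum_flipTrees_eq_sArb_Mf (hf01 : ∀ e, f e = 0 ∨ f e = 1)
    (hfE : ∀ e, e ∉ E → f e = 0) (hxE : ∀ e, e ∉ E → x e = 0) (r : Fin n) :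
    ∑ T ∈ univ.filter (fun T : Finset (Fin n × Fin n) =>
        IsDirTree n T ∧ T ⊆ E ∧ IsArb n r (flipSet n f T)),
      ∏ e ∈ T, (if f e = 1 then 1 - x e else x e) = SArb n r (Mf n f x) := by
  rw [SArb, ← sum_fiberwise_of_maps_to (g := flipSet n f)
    fun T hT => mem_filter.mpr ⟨mem_univ _, (mem_filter.mp hT).2.2.2⟩]
  refine sum_congr rfl fun A hA => ?_
  rw [filter_filter]
  exact sum_flipTrees_fiber_eq_prod_Mf hf01 hfE hxE (mem_filter.mp hA).2

lemma Mf_nonneg (hf01 : ∀ e, f e = 0 ∨ f e = 1) (hx01 : ∀ e, x e ∈ Set.Icc 0 1)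
    (e : Fin n × Fin n) : 0 ≤ Mf n f x e := by
  have hf1 : ∀ e, f e ≤ 1 := fun e => by rcases hf01 e with h | h <;> simp [h]
  have hf0 : ∀ e, 0 ≤ f e := fun e => by rcases hf01 e with h | h <;> simp [h]
  exact add_nonneg (mul_nonneg (hx01 e).1 (sub_nonneg.mpr (hf1 e)))
    (mul_nonneg (sub_nonneg.mpr (hx01 (rev e)).2) (hf0 (rev e)))

lemma memFlowPolytope.sum_erase_sub_eq (hx : memFlowPolytope n E d x) (v : Fin n) :
    ∑ i ∈ univ.erase v, (x (v, i) - x (i, v)) = d v := by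
  rw [sum_erase univ (f := fun i => x (v, i) - x (i, v)) (sub_self _), sum_sub_distrib]
  exact hx.2.2 v

lemma memCircBar_Mf (hf : memFlowPolytope n E d f) (hx : memFlowPolytope n E d x) :
    memCircBar n (Mf n f x) := by
  intro v
  have hterm : ∀ i, Mf n f x (v, i) - Mf n f x (i, v) =
      (x (v, i) - x (i, v)) - (f (v, i) - f (i, v)) := fun i => by
    simp only [Mf, rev]
    ring
  rw [filter_ne', ← sum_sub_distrib, sum_congr rfl fun i _ => hterm i, sum_sub_distrib,
    hx.sum_erase_sub_eq, hf.sum_erase_sub_eq, sub_self]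

end

theorem root_independence_general (n : ℕ)
    (E : Finset (Fin n × Fin n)) (d : Fin n → ℤ)
    (f : Fin n × Fin n → ℝ) (hf : IsVertex n E d f)
    (r s : Fin n) (x : Fin n × Fin n → ℝ) (hx : memFlowPolytope n E d x) :
    Pfr n E f r x = Pfr n E f s x := by
  have hf01 := hf.eq_zero_or_eq_one
  rw [Pfr, Pfr, sum_flipTrees_eq_sArb_Mf hf01 hf.1.1 hx.1,
    sum_flipTrees_eq_sArb_Mf hf01 hf.1.1 hx.1,
    sArb_eq_sArb_of_nonneg_of_memCircBar (Mf_nonneg hf01 hx.mem_Icc) (memCircBar_Mf hf.1 hx) r s]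

/-- Root Independence Lemma: `P_{f,r}(x) = P_{f,s}(x)` on `P`. -/
theorem root_independence (n : ℕ) (hn : 2 ≤ n)
    (E : Finset (Fin n × Fin n)) (hE : E ⊆ E0 n) (d : Fin n → ℤ)
    (f : Fin n × Fin n → ℝ) (hf : IsVertex n E d f)
    (r s : Fin n) (x : Fin n × Fin n → ℝ) (hx : memFlowPolytope n E d x) :
    Pfr n E f r x = Pfr n E f s x :=
  root_independence_general n E d f hf r s x hx
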